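/- arXiv:1401.2506 — 2 statements merged into one kernel-verified Lean document; each statement's English description precedes it below -/
import Mathlib

section
/- Let Γ ⊆ ℂ \ {0} be Carleson with constant C. Then the image Γ' = {1/z : z ∈ Γ} of Γ under the inversion z ↦ 1/z satisfies μ(Γ' ∩ D(w,r)) ≤ 16·C·r for every w ∈ Γ' and every r > 0. -/
/-!
Inversion is `m⁻²`-Lipschitz on `{‖z‖ ≥ m}`, so it multiplies `μH¹` of such sets by at most `m⁻²`.
If `2r ≤ ‖w‖`, the preimage of `D(w,r)` lies in `{‖z‖ ≥ 2/(3‖w‖)}` and in `D(1/w, 2r/‖w‖²)`,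
so its image has measure at most `(9/2)·C·r`. If `2r > ‖w‖`, then `D(w,r) ⊆ D(0,3r)`, and the
preimage of `D(0,R)` splits into the dyadic shells `2ᵏ ≤ R‖z‖ < 2ᵏ⁺¹`, whose images have measure
at most `2⁻ᵏ·2CR`; these sum to `4CR`.
-/

open MeasureTheory Metric

def IsCarleson {X : Type*} [MetricSpace X] [MeasurableSpace X] [BorelSpace X]
    (Γ : Set X) (C : ℝ) : Prop :=
  ∀ (z : X) (r : ℝ), 0 < r → μH[1] (Γ ∩ ball z r) ≤ ENNReal.ofReal (C * r)

lemma ofReal_mul_le_ofReal_mul_of_le {C s t : ℝ} (hs : 0 ≤ s) (hst : s ≤ t) :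
    ENNReal.ofReal (C * s) ≤ ENNReal.ofReal (C * t) := by
  rcases le_total C 0 with hC | hC
  · simp [ENNReal.ofReal_of_nonpos (mul_nonpos_of_nonpos_of_nonneg hC hs)]
  · gcongr

section NormedDivisionRing

variable {𝕜 : Type*} [NormedDivisionRing 𝕜]

lemma lipschitzOnWith_inv_of_le_norm {m : ℝ} (hm : 0 < m) :
    LipschitzOnWith (m ^ 2)⁻¹.toNNReal (fun z : 𝕜 => z⁻¹) {z | m ≤ ‖z‖} := by
  refine LipschitzOnWith.of_dist_le_mul fun x (hx : m ≤ ‖x‖) y (hy : m ≤ ‖y‖) => ?_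
  have hx0 : x ≠ 0 := norm_pos_iff.mp (hm.trans_le hx)
  have hy0 : y ≠ 0 := norm_pos_iff.mp (hm.trans_le hy)
  rw [dist_inv_inv₀ hx0 hy0, Real.coe_toNNReal _ (by positivity), div_eq_inv_mul]
  gcongr
  rw [sq]
  exact mul_le_mul hx hy hm.le (norm_nonneg _)

lemma le_norm_and_mem_ball_inv_of_inv_mem_ball {z w : 𝕜} {r : ℝ} (hz : z⁻¹ ∈ ball w r)
    (hrw : 2 * r ≤ ‖w‖) :
    2 / (3 * ‖w‖) ≤ ‖z‖ ∧ z ∈ ball w⁻¹ (2 * r / ‖w‖ ^ 2) := by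
  rw [mem_ball] at hz ⊢
  have hclose :=
    abs_sub_lt_iff.mp ((abs_norm_sub_norm_le z⁻¹ w).trans_lt (dist_eq_norm z⁻¹ w ▸ hz))
  have hr : 0 < r := dist_nonneg.trans_lt hz
  have hw : 0 < ‖w‖ := by linarith
  have hz' : ‖w‖ / 2 < ‖z⁻¹‖ := by linarith
  have hz0 : z ≠ 0 := by
    rintro rfl
    simp only [inv_zero, norm_zero] at hz'
    linarith
  constructor
  · rw [norm_inv] at hclose
    rw [div_le_iff₀ (by positivity)]
    have := mul_inv_cancel₀ (norm_ne_zero_iff.mpr hz0)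
    nlinarith [norm_nonneg z]
  · calc dist z w⁻¹ = dist z⁻¹⁻¹ w⁻¹ := by rw [inv_inv]
      _ = dist z⁻¹ w / (‖z⁻¹‖ * ‖w‖) := dist_inv_inv₀ (inv_ne_zero hz0) (norm_pos_iff.mp hw)
      _ < r / (‖w‖ / 2 * ‖w‖) := by gcongr
      _ = 2 * r / ‖w‖ ^ 2 := by field_simp

variable [MeasurableSpace 𝕜] [BorelSpace 𝕜]

lemma hausdorffMeasure_image_inv_le {m : ℝ} (hm : 0 < m) {S : Set 𝕜} (hS : ∀ z ∈ S, m ≤ ‖z‖) :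
    μH[1] ((fun z : 𝕜 => z⁻¹) '' S) ≤ ENNReal.ofReal (m ^ 2)⁻¹ * μH[1] S := by
  simpa [ENNReal.ofReal] using
    ((lipschitzOnWith_inv_of_le_norm hm).mono hS).hausdorffMeasure_image_le zero_le_one

namespace IsCarleson

variable {Γ : Set 𝕜} {C : ℝ}

lemma hausdorffMeasure_image_inv_le_of_subset_ball (hΓ : IsCarleson Γ C) {S : Set 𝕜} {z : 𝕜}
    {ρ m : ℝ} (hρ : 0 < ρ) (hm : 0 < m) (hSΓ : S ⊆ Γ ∩ ball z ρ) (hS : ∀ z ∈ S, m ≤ ‖z‖) :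
    μH[1] ((fun z : 𝕜 => z⁻¹) '' S) ≤ ENNReal.ofReal (C * (ρ / m ^ 2)) :=
  calc μH[1] ((fun z : 𝕜 => z⁻¹) '' S)
      ≤ ENNReal.ofReal (m ^ 2)⁻¹ * μH[1] S := hausdorffMeasure_image_inv_le hm hS
    _ ≤ ENNReal.ofReal (m ^ 2)⁻¹ * ENNReal.ofReal (C * ρ) := by
      gcongr
      exact (measure_mono hSΓ).trans (hΓ z ρ hρ)
    _ = ENNReal.ofReal (C * (ρ / m ^ 2)) := by
      rw [← ENNReal.ofReal_mul (by positivity)]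
      ring_nf

lemma hausdorffMeasure_image_inv_inter_ball_le_of_two_mul_le (hΓ : IsCarleson Γ C) {w : 𝕜}
    {r : ℝ} (hr : 0 < r) (hrw : 2 * r ≤ ‖w‖) :
    μH[1] ((fun z : 𝕜 => z⁻¹) '' Γ ∩ ball w r) ≤ ENNReal.ofReal (C * (9 / 2 * r)) := by
  have hw : 0 < ‖w‖ := by linarith
  set S := Γ ∩ (fun z : 𝕜 => z⁻¹) ⁻¹' ball w r
  have hS : (fun z : 𝕜 => z⁻¹) '' Γ ∩ ball w r ⊆ (fun z : 𝕜 => z⁻¹) '' S := by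
    rintro _ ⟨⟨z, hz, rfl⟩, hzw⟩
    exact ⟨z, ⟨hz, hzw⟩, rfl⟩
  calc μH[1] ((fun z : 𝕜 => z⁻¹) '' Γ ∩ ball w r)
      ≤ μH[1] ((fun z : 𝕜 => z⁻¹) '' S) := measure_mono hS
    _ ≤ ENNReal.ofReal (C * (2 * r / ‖w‖ ^ 2 / (2 / (3 * ‖w‖)) ^ 2)) :=
      hΓ.hausdorffMeasure_image_inv_le_of_subset_ball (z := w⁻¹) (by positivity) (by positivity)
        (fun z hz => ⟨hz.1, (le_norm_and_mem_ball_inv_of_inv_mem_ball hz.2 hrw).2⟩)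
        (fun z hz => (le_norm_and_mem_ball_inv_of_inv_mem_ball hz.2 hrw).1)
    _ = ENNReal.ofReal (C * (9 / 2 * r)) := by
      congr 2
      field_simp
      ring

lemma hausdorffMeasure_image_inv_inter_ball_zero_le (hΓ : IsCarleson Γ C) (h0 : (0 : 𝕜) ∉ Γ)
    {R : ℝ} (hR : 0 < R) :
    μH[1] ((fun z : 𝕜 => z⁻¹) '' Γ ∩ ball 0 R) ≤ ENNReal.ofReal (C * (4 * R)) := by
  set shell : ℕ → Set 𝕜 := fun k => Γ ∩ {z | 2 ^ k / R ≤ ‖z‖ ∧ ‖z‖ < 2 ^ (k + 1) / R}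
  have hcover : (fun z : 𝕜 => z⁻¹) '' Γ ∩ ball 0 R ⊆ ⋃ k, (fun z : 𝕜 => z⁻¹) '' shell k := by
    rintro _ ⟨⟨z, hz, rfl⟩, hzR⟩
    have hz0 : 0 < ‖z‖ := norm_pos_iff.mpr (ne_of_mem_of_not_mem hz h0)
    have hRz : 1 ≤ R * ‖z‖ := by
      rw [mem_ball_zero_iff, norm_inv, inv_lt_iff_one_lt_mul₀ hz0] at hzR
      linarith
    obtain ⟨k, hk, hk'⟩ := exists_nat_pow_near hRz one_lt_two
    refine Set.mem_iUnion.mpr ⟨k, z, ⟨hz, ?_, ?_⟩, rfl⟩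
    · rwa [div_le_iff₀' hR]
    · rwa [lt_div_iff₀' hR]
  have hshell (k : ℕ) : μH[1] ((fun z : 𝕜 => z⁻¹) '' shell k) ≤
      2⁻¹ ^ k * ENNReal.ofReal (C * (2 * R)) :=
    calc μH[1] ((fun z : 𝕜 => z⁻¹) '' shell k)
        ≤ ENNReal.ofReal (C * (2 ^ (k + 1) / R / (2 ^ k / R) ^ 2)) :=
          hΓ.hausdorffMeasure_image_inv_le_of_subset_ball (z := 0) (by positivity) (by positivity)
            (fun z hz => ⟨hz.1, mem_ball_zero_iff.mpr hz.2.2⟩) (fun z hz => hz.2.1)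
      _ = 2⁻¹ ^ k * ENNReal.ofReal (C * (2 * R)) := by
        rw [← ENNReal.ofReal_ofNat 2, ← ENNReal.ofReal_inv_of_pos two_pos,
          ← ENNReal.ofReal_pow (by norm_num), ← ENNReal.ofReal_mul (by positivity)]
        congr 1
        rw [inv_pow]
        field_simp
        ring
  calc μH[1] ((fun z : 𝕜 => z⁻¹) '' Γ ∩ ball 0 R)
      ≤ ∑' k, μH[1] ((fun z : 𝕜 => z⁻¹) '' shell k) :=
        (measure_mono hcover).trans (measure_iUnion_le _)
    _ ≤ ∑' k : ℕ, 2⁻¹ ^ k * ENNReal.ofReal (C * (2 * R)) := ENNReal.tsum_le_tsum hshell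
    _ = ENNReal.ofReal (C * (4 * R)) := by
      rw [ENNReal.tsum_mul_right, ENNReal.tsum_geometric_two, ← ENNReal.ofReal_ofNat 2,
        ← ENNReal.ofReal_mul zero_le_two]
      ring_nf

end IsCarleson

end NormedDivisionRing

/-- If `Γ ⊆ ℂ \ {0}` is Carleson with constant `C`, then its image
under inversion `z ↦ 1/z` satisfies `μ(Γ' ∩ D(w,r)) ≤ 16·C·r` for every
`w ∈ Γ'` and `r > 0`. -/
theorem statement1 (Γ : Set ℂ) (hΓ : (0 : ℂ) ∉ Γ) (C : ℝ)
    (hCar : ∀ (z : ℂ) (r : ℝ), 0 < r →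
      μH[1] (Γ ∩ ball z r) ≤ ENNReal.ofReal (C * r)) :
    ∀ w ∈ (fun z : ℂ => z⁻¹) '' Γ, ∀ r : ℝ, 0 < r →
      μH[1] ((fun z : ℂ => z⁻¹) '' Γ ∩ ball w r) ≤ ENNReal.ofReal (16 * C * r) := by
  have hCarleson : IsCarleson Γ C := hCar
  intro w _ r hr
  rw [mul_comm 16 C, mul_assoc]
  rcases le_or_gt (2 * r) ‖w‖ with hrw | hwr
  · calc μH[1] ((fun z : ℂ => z⁻¹) '' Γ ∩ ball w r)
        ≤ ENNReal.ofReal (C * (9 / 2 * r)) :=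
          hCarleson.hausdorffMeasure_image_inv_inter_ball_le_of_two_mul_le hr hrw
      _ ≤ ENNReal.ofReal (C * (16 * r)) :=
          ofReal_mul_le_ofReal_mul_of_le (by positivity) (by linarith)
  · have hball : ball w r ⊆ ball 0 (3 * r) := ball_subset_ball' (by simp; linarith)
    calc μH[1] ((fun z : ℂ => z⁻¹) '' Γ ∩ ball w r)
        ≤ μH[1] ((fun z : ℂ => z⁻¹) '' Γ ∩ ball 0 (3 * r)) := by gcongr
      _ ≤ ENNReal.ofReal (C * (4 * (3 * r))) :=
          hCarleson.hausdorffMeasure_image_inv_inter_ball_zero_le hΓ (by positivity)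
      _ ≤ ENNReal.ofReal (C * (16 * r)) :=
          ofReal_mul_le_ofReal_mul_of_le (by positivity) (by linarith)
end

section
/- Let 1 ≤ r ≤ p < ∞, let Γ ⊆ ℂ be Carleson with constant C, and let z₀ ∈ ℂ with dist(z₀, Γ) > 0. Let h : ℂ → ℂ be measurable with ∫_Γ |z − z₀|^{p−2} |h(z)|^p dμ(z) < ∞. Then ∫_Γ |z − z₀|^{r−2} |h(z)|^r dμ(z) < ∞. That is, L̇^p(Γ) ⊆ L̇^r(Γ). -/
/-!
Since `dist(z₀, Γ) > 0`, the weight `|z - z₀|⁻²` is integrable over `Γ`: on the dyadic annulus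
`d 2ⁿ ≤ |z - z₀| < d 2ⁿ⁺¹` (with `d = dist(z₀, Γ)`) it is at most `(d 2ⁿ)⁻²` while the Carleson
condition bounds the length of `Γ` there by `C d 2ⁿ⁺¹`, so the pieces form a convergent geometric
series. Pointwise, with `t = |z - z₀| |h(z)|`, the inequality `t^r ≤ 1 + t^p` multiplied by
`|z - z₀|⁻²` gives `|z - z₀|^{r-2}|h|^r ≤ |z - z₀|⁻² + |z - z₀|^{p-2}|h|^p`.
-/

open MeasureTheory Metric

lemma rpow_le_one_add_rpow {t r p : ℝ} (ht : 0 ≤ t) (hr : 0 ≤ r) (hrp : r ≤ p) :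
    t ^ r ≤ 1 + t ^ p := by
  rcases le_total t 1 with ht1 | ht1
  · linarith [Real.rpow_le_one ht ht1 hr, Real.rpow_nonneg ht p]
  · linarith [Real.rpow_le_rpow_of_exponent_le ht1 hrp]

lemma rpow_sub_mul_rpow_le_add {A H r p : ℝ} (b : ℝ) (hA : 0 < A) (hH : 0 ≤ H) (hr : 0 ≤ r)
    (hrp : r ≤ p) : A ^ (r - b) * H ^ r ≤ A ^ (-b) + A ^ (p - b) * H ^ p := by
  have split (q : ℝ) : A ^ (q - b) * H ^ q = A ^ (-b) * (A * H) ^ q := by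
    rw [Real.mul_rpow hA.le hH, ← mul_assoc, ← Real.rpow_add hA, neg_add_eq_sub]
  rw [split, split]
  calc A ^ (-b) * (A * H) ^ r ≤ A ^ (-b) * (1 + (A * H) ^ p) :=
        mul_le_mul_of_nonneg_left (rpow_le_one_add_rpow (by positivity) hr hrp) (by positivity)
    _ = A ^ (-b) + A ^ (-b) * (A * H) ^ p := by ring

section

variable {X : Type*} [MetricSpace X] [MeasurableSpace X] {μ : Measure X} {s : Set X} {x : X}

lemma setLIntegral_dist_rpow_neg_lt_top [OpensMeasurableSpace X] {C a : ℝ} (ha : 1 < a)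
    (hgrowth : ∀ ρ, 0 < ρ → μ (s ∩ ball x ρ) ≤ ENNReal.ofReal (C * ρ)) (hd : 0 < infDist x s) :
    ∫⁻ z in s, ENNReal.ofReal (dist z x ^ (-a)) ∂μ < ⊤ := by
  set d := infDist x s
  set q : ℝ := 2 ^ (1 - a)
  set K := ENNReal.ofReal (2 * C * d ^ (1 - a))
  let annulus (n : ℕ) : Set X := s ∩ (ball x (d * 2 ^ (n + 1)) \ ball x (d * 2 ^ n))
  have hcover : s ⊆ ⋃ n, annulus n := by
    intro z hz
    have hdz : d ≤ dist z x := dist_comm x z ▸ infDist_le_dist_of_mem hz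
    obtain ⟨n, hn, hn'⟩ := exists_nat_pow_near ((one_le_div hd).2 hdz) one_lt_two
    rw [le_div_iff₀ hd, mul_comm] at hn
    rw [div_lt_iff₀ hd, mul_comm] at hn'
    exact Set.mem_iUnion.2 ⟨n, hz, mem_ball.2 hn', fun h => (mem_ball.1 h).not_ge hn⟩
  have hannulus (n : ℕ) :
      ∫⁻ z in annulus n, ENNReal.ofReal (dist z x ^ (-a)) ∂μ ≤ K * ENNReal.ofReal q ^ n := by
    have hρ : 0 < d * 2 ^ n := by positivity
    have hweight : ∀ z ∈ annulus n,
        ENNReal.ofReal (dist z x ^ (-a)) ≤ ENNReal.ofReal ((d * 2 ^ n) ^ (-a)) := by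
      rintro z ⟨-, -, hz⟩
      exact ENNReal.ofReal_le_ofReal
        (Real.rpow_le_rpow_of_nonpos hρ (not_lt.1 hz) (by linarith))
    have hmeasure : μ (annulus n) ≤ ENNReal.ofReal (C * (d * 2 ^ (n + 1))) :=
      (measure_mono (Set.inter_subset_inter_right _ Set.sdiff_subset)).trans
        (hgrowth _ (by positivity))
    have hscale : (d * 2 ^ n) ^ (-a) * (C * (d * 2 ^ (n + 1))) = 2 * C * d ^ (1 - a) * q ^ n := by
      calc (d * 2 ^ n) ^ (-a) * (C * (d * 2 ^ (n + 1)))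
          = 2 * C * ((d * 2 ^ n) ^ (-a) * (d * 2 ^ n)) := by ring
        _ = 2 * C * (d ^ (1 - a) * q ^ n) := by
          rw [← Real.rpow_add_one hρ.ne', neg_add_eq_sub, Real.mul_rpow hd.le (by positivity),
            Real.rpow_pow_comm zero_le_two]
        _ = 2 * C * d ^ (1 - a) * q ^ n := by ring
    calc ∫⁻ z in annulus n, ENNReal.ofReal (dist z x ^ (-a)) ∂μ
        ≤ ∫⁻ _ in annulus n, ENNReal.ofReal ((d * 2 ^ n) ^ (-a)) ∂μ :=
          setLIntegral_mono measurable_const hweight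
      _ ≤ ENNReal.ofReal ((d * 2 ^ n) ^ (-a)) * ENNReal.ofReal (C * (d * 2 ^ (n + 1))) := by
          rw [setLIntegral_const]; gcongr
      _ = K * ENNReal.ofReal q ^ n := by
          rw [← ENNReal.ofReal_mul (by positivity), hscale, ENNReal.ofReal_mul' (by positivity),
            ENNReal.ofReal_pow (by positivity)]
  have hq : ENNReal.ofReal q < 1 :=
    ENNReal.ofReal_lt_one.2 (Real.rpow_lt_one_of_one_lt_of_neg one_lt_two (by linarith))
  calc ∫⁻ z in s, ENNReal.ofReal (dist z x ^ (-a)) ∂μ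
      ≤ ∫⁻ z in ⋃ n, annulus n, ENNReal.ofReal (dist z x ^ (-a)) ∂μ := lintegral_mono_set hcover
    _ ≤ ∑' n, ∫⁻ z in annulus n, ENNReal.ofReal (dist z x ^ (-a)) ∂μ := lintegral_iUnion_le _ _
    _ ≤ ∑' n, K * ENNReal.ofReal q ^ n := ENNReal.tsum_le_tsum hannulus
    _ = K * (1 - ENNReal.ofReal q)⁻¹ := by rw [ENNReal.tsum_mul_left, ENNReal.tsum_geometric]
    _ < ⊤ := ENNReal.mul_lt_top ENNReal.ofReal_lt_top
        (ENNReal.inv_lt_top.2 (tsub_pos_of_lt hq))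

lemma setLIntegral_dist_rpow_mul_norm_rpow_lt_top_of_le [OpensMeasurableSpace X]
    [MeasurableSingletonClass X] {E : Type*} [NormedAddCommGroup E] {b r p : ℝ} (hr : 0 ≤ r)
    (hrp : r ≤ p) (hx : x ∉ s) (h : X → E)
    (hb : ∫⁻ z in s, ENNReal.ofReal (dist z x ^ (-b)) ∂μ < ⊤)
    (hp : ∫⁻ z in s, ENNReal.ofReal (dist z x ^ (p - b) * ‖h z‖ ^ p) ∂μ < ⊤) :
    ∫⁻ z in s, ENNReal.ofReal (dist z x ^ (r - b) * ‖h z‖ ^ r) ∂μ < ⊤ := by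
  have hne : ∀ᵐ z ∂μ.restrict s, z ∉ ({x} : Set X) := by
    rw [← measure_eq_zero_iff_ae_notMem, Measure.restrict_apply (measurableSet_singleton x),
      Set.singleton_inter_eq_empty.2 hx, measure_empty]
  calc ∫⁻ z in s, ENNReal.ofReal (dist z x ^ (r - b) * ‖h z‖ ^ r) ∂μ
      ≤ ∫⁻ z in s, ENNReal.ofReal (dist z x ^ (-b)) +
          ENNReal.ofReal (dist z x ^ (p - b) * ‖h z‖ ^ p) ∂μ := by
        refine lintegral_mono_ae (hne.mono fun z hz => ?_)
        rw [← ENNReal.ofReal_add (by positivity) (by positivity)]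
        exact ENNReal.ofReal_le_ofReal
          (rpow_sub_mul_rpow_le_add b (dist_pos.2 hz) (norm_nonneg _) hr hrp)
    _ = (∫⁻ z in s, ENNReal.ofReal (dist z x ^ (-b)) ∂μ) +
          ∫⁻ z in s, ENNReal.ofReal (dist z x ^ (p - b) * ‖h z‖ ^ p) ∂μ :=
        lintegral_add_left (by fun_prop) _
    _ < ⊤ := ENNReal.add_lt_top.2 ⟨hb, hp⟩

end

theorem statement13_general (p r : ℝ) (hr : 1 ≤ r) (hrp : r ≤ p)
    (Γ : Set ℂ) (C : ℝ)
    (hCar : ∀ (z : ℂ) (ρ : ℝ), 0 < ρ →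
      μH[1] (Γ ∩ ball z ρ) ≤ ENNReal.ofReal (C * ρ))
    (z₀ : ℂ) (hz₀ : 0 < Metric.infDist z₀ Γ)
    (h : ℂ → ℂ)
    (hLp : ∫⁻ z in Γ,
        ENNReal.ofReal (‖z - z₀‖ ^ (p - 2) * ‖h z‖ ^ p)
          ∂(μH[1] : Measure ℂ) < ⊤) :
    ∫⁻ z in Γ,
        ENNReal.ofReal (‖z - z₀‖ ^ (r - 2) * ‖h z‖ ^ r)
          ∂(μH[1] : Measure ℂ) < ⊤ := by
  have hz₀Γ : z₀ ∉ Γ := fun hmem => hz₀.ne' (infDist_zero_of_mem hmem)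
  simp only [← dist_eq_norm] at hLp ⊢
  exact setLIntegral_dist_rpow_mul_norm_rpow_lt_top_of_le (by linarith) hrp hz₀Γ h
    (setLIntegral_dist_rpow_neg_lt_top one_lt_two (hCar z₀) hz₀) hLp

/-- Let `1 ≤ r ≤ p < ∞`, let `Γ ⊆ ℂ` be Carleson with constant
`C`, and `z₀ ∈ ℂ` with `dist(z₀, Γ) > 0`. If `h` is measurable with
`∫_Γ |z - z₀|^{p-2}|h(z)|^p dμ < ∞`, then `∫_Γ |z - z₀|^{r-2}|h(z)|^r dμ < ∞`;
that is, `L̇^p(Γ) ⊆ L̇^r(Γ)`. -/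
theorem statement13 (p r : ℝ) (hr : 1 ≤ r) (hrp : r ≤ p)
    (Γ : Set ℂ) (C : ℝ) (hC : 0 < C)
    (hCar : ∀ (z : ℂ) (ρ : ℝ), 0 < ρ →
      μH[1] (Γ ∩ ball z ρ) ≤ ENNReal.ofReal (C * ρ))
    (z₀ : ℂ) (hz₀ : 0 < Metric.infDist z₀ Γ)
    (h : ℂ → ℂ) (hmeas : Measurable h)
    (hLp : ∫⁻ z in Γ,
        ENNReal.ofReal (‖z - z₀‖ ^ (p - 2) * ‖h z‖ ^ p)
          ∂(μH[1] : Measure ℂ) < ⊤) :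
    ∫⁻ z in Γ,
        ENNReal.ofReal (‖z - z₀‖ ^ (r - 2) * ‖h z‖ ^ r)
          ∂(μH[1] : Measure ℂ) < ⊤ :=
  statement13_general p r hr hrp Γ C hCar z₀ hz₀ h hLp
end
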